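/- arXiv:1210.2793 — 2 statements merged into one kernel-verified Lean document; each statement's English description precedes it below -/
import Mathlib

section
/- Let cl be a pregeometry closure operator on a set Ω that is trivial over a subset A, meaning that for every nonempty set S we have cl(A ∪ S) = ⋃_{s ∈ S} cl(A ∪ {s}). If d ∈ cl(A ∪ {a₁, …, aᵣ}) and aᵢ ∉ cl(A ∪ {d}) for every i = 1, …, r, then d ∈ cl(A). -/
theorem mem_cl_of_mem_cl_union_of_forall_notMem {Ω : Type*} (cl : Set Ω → Set Ω)
    (hexch : ∀ (S : Set Ω) (x y : Ω), x ∈ cl (S ∪ {y}) → x ∉ cl S → y ∈ cl (S ∪ {x}))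
    (A : Set Ω)
    (htriv : ∀ S : Set Ω, S.Nonempty → cl (A ∪ S) = ⋃ s ∈ S, cl (A ∪ {s}))
    {S : Set Ω} {d : Ω} (hd : d ∈ cl (A ∪ S)) (hS : ∀ s ∈ S, s ∉ cl (A ∪ {d})) :
    d ∈ cl A := by
  rcases S.eq_empty_or_nonempty with rfl | hne
  · simpa using hd
  obtain ⟨s, hs, hds⟩ := Set.mem_iUnion₂.mp (htriv S hne ▸ hd)
  by_contra hdA
  exact hS s hs (hexch A d s hds hdA)

theorem stmt_0_general {Ω : Type*} (cl : Set Ω → Set Ω)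
    (hexch : ∀ (S : Set Ω) (x y : Ω), x ∈ cl (S ∪ {y}) → x ∉ cl S → y ∈ cl (S ∪ {x}))
    (A : Set Ω)
    (htriv : ∀ S : Set Ω, S.Nonempty → cl (A ∪ S) = ⋃ s ∈ S, cl (A ∪ {s}))
    (r : ℕ) (a : Fin r → Ω) (d : Ω)
    (hd : d ∈ cl (A ∪ Set.range a))
    (hna : ∀ i : Fin r, a i ∉ cl (A ∪ {d})) :
    d ∈ cl A :=
  mem_cl_of_mem_cl_union_of_forall_notMem cl hexch A htriv hd (Set.forall_mem_range.2 hna)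

theorem stmt_0 {Ω : Type*} (cl : Set Ω → Set Ω)
    (hsub : ∀ S : Set Ω, S ⊆ cl S)
    (hmono : ∀ S T : Set Ω, S ⊆ T → cl S ⊆ cl T)
    (hidem : ∀ S : Set Ω, cl (cl S) = cl S)
    (hfin : ∀ (S : Set Ω) (x : Ω), x ∈ cl S → ∃ S₀ ⊆ S, S₀.Finite ∧ x ∈ cl S₀)
    (hexch : ∀ (S : Set Ω) (x y : Ω), x ∈ cl (S ∪ {y}) → x ∉ cl S → y ∈ cl (S ∪ {x}))
    (A : Set Ω)
    (htriv : ∀ S : Set Ω, S.Nonempty → cl (A ∪ S) = ⋃ s ∈ S, cl (A ∪ {s}))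
    (r : ℕ) (a : Fin r → Ω) (d : Ω)
    (hd : d ∈ cl (A ∪ Set.range a))
    (hna : ∀ i : Fin r, a i ∉ cl (A ∪ {d})) :
    d ∈ cl A :=
  stmt_0_general cl hexch A htriv r a d hd hna
end

section
/- Let G be an abelian group in which the 2-torsion-type kernel {x ∈ G : 2x = 0} is finite, and let H be a subgroup of G × G such that both H ∩ (G × {0}) and H ∩ ({0} × G) are finite. Then for any fixed e, e' ∈ G, the set {(g, h) ∈ G × G : (g, h − e) ∈ H and (g, −h − e') ∈ H} is finite. -/
/-!
Adding and subtracting `(g, h - e)` and `(g, -h - e')` gives `(2 • g, -e - e') ∈ H` and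
`(0, 2 • h - e + e') ∈ H`. Since `H` meets `G × {0}` and `{0} × G` in finite sets, these confine
`2 • g` and `2 • h` to finite sets, and as multiplication by `2` has finite kernel, `g` and `h`
then range over finite sets too.
-/

section FiniteKernel

variable {A B : Type*} [AddGroup A] [AddGroup B]

theorem AddMonoidHom.finite_preimage_singleton_of_finite_ker (f : A →+ B)
    (hf : {a | f a = 0}.Finite) (b : B) : (f ⁻¹' {b}).Finite := by
  rcases (f ⁻¹' {b}).eq_empty_or_nonempty with h | ⟨a₀, ha₀⟩
  · simp [h]
  refine (hf.image (a₀ + ·)).subset fun a ha => ⟨-a₀ + a, ?_, by simp⟩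
  simp_all

theorem AddMonoidHom.finite_preimage_of_finite_ker (f : A →+ B) (hf : {a | f a = 0}.Finite)
    {s : Set B} (hs : s.Finite) : (f ⁻¹' s).Finite :=
  hs.preimage' fun b _ => f.finite_preimage_singleton_of_finite_ker hf b

theorem AddSubgroup.finite_setOf_mk_mem (H : AddSubgroup (A × B))
    (hH : {p : A × B | p ∈ H ∧ p.2 = 0}.Finite) (b : B) : {a | (a, b) ∈ H}.Finite := by
  let f : H →+ B := (AddMonoidHom.snd A B).comp H.subtype
  have hf : {p : H | f p = 0}.Finite :=
    (hH.preimage Subtype.val_injective.injOn).subset fun p hp => ⟨p.2, hp⟩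
  refine ((f.finite_preimage_singleton_of_finite_ker hf b).image fun p => p.1.1).subset ?_
  exact fun a ha => ⟨⟨(a, b), ha⟩, rfl, rfl⟩

end FiniteKernel

section Claims

variable {G : Type*} [AddCommGroup G] (H : AddSubgroup (G × G)) {g h e e' : G}

theorem AddSubgroup.mk_two_nsmul_mem (h₁ : (g, h - e) ∈ H) (h₂ : (g, -h - e') ∈ H) :
    (2 • g, -e - e') ∈ H := by
  convert H.add_mem h₁ h₂ using 1
  ext
  · exact two_nsmul g
  · simp only [Prod.snd_add]
    abel

theorem AddSubgroup.mk_zero_two_nsmul_mem (h₁ : (g, h - e) ∈ H) (h₂ : (g, -h - e') ∈ H) :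
    (0, 2 • h - e + e') ∈ H := by
  convert H.sub_mem h₁ h₂ using 1
  ext
  · exact (sub_self g).symm
  · simp only [Prod.snd_sub]
    abel

end Claims

theorem stmt_6 {G : Type*} [AddCommGroup G]
    (htor : {x : G | 2 • x = 0}.Finite)
    (H : AddSubgroup (G × G))
    (hfin1 : {p : G × G | p ∈ H ∧ p.2 = 0}.Finite)
    (hfin2 : {p : G × G | p ∈ H ∧ p.1 = 0}.Finite)
    (e e' : G) :
    {p : G × G | (p.1, p.2 - e) ∈ H ∧ (p.1, -p.2 - e') ∈ H}.Finite := by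
  have halve {s : Set G} (hs : s.Finite) : {g : G | 2 • g ∈ s}.Finite :=
    (nsmulAddMonoidHom (α := G) 2).finite_preimage_of_finite_ker htor hs
  have hfst : {x | (x, -e - e') ∈ H}.Finite := H.finite_setOf_mk_mem hfin1 _
  have hsnd : {y | (0, y) ∈ H}.Finite :=
    (hfin2.image Prod.snd).subset fun y hy => ⟨(0, y), ⟨hy, rfl⟩, rfl⟩
  refine ((halve hfst).prod (halve (hsnd.image (· + e - e')))).subset ?_
  rintro ⟨g, h⟩ ⟨h₁, h₂⟩
  refine ⟨H.mk_two_nsmul_mem h₁ h₂, 2 • h - e + e', H.mk_zero_two_nsmul_mem h₁ h₂, ?_⟩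
  dsimp only
  abel
end
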